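/- The odd fermionic symmetry generators of the periodic gl(1|1) spin chain commute with all periodic Temperley–Lieb generators: for every n ≥ 0 with 2n+1 ≤ N and every 1 ≤ j ≤ N (periodic convention), [e_j, F_(2n+1)] = 0 and [e_j, F†_(2n+1)] = 0; moreover e_j F_(N) = F_(N) e_j = 0 and e_j F†_(N) = F†_(N) e_j = 0 for every 1 ≤ j ≤ N, where F_(N) = f_1 f_2 ⋯ f_N and F†_(N) = f_1† f_2† ⋯ f_N†. -/

import Mathlib

/-!
Write `u = f_j + f_{j+1}` and `v = f_j† + f_{j+1}†`. The Jordan–Wigner fermions satisfy the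
canonical anticommutation relations, so `u² = v² = 0`, and `uv + vu = 0` because the diagonal
anticommutators `(-1)^j` and `(-1)^{j+1}` cancel (on the bond `(N, 1)` this needs `N` even). Hence
`e_j = uv` is annihilated by `u` and `v` on both sides and commutes with every `f_k`, `f_k†` with
`k ∉ {j, j+1}`.

In `F_(m)`, a monomial containing both `f_j` and `f_{j+1}` is killed by `e_j` on both sides (this
is also the statement about `F_(N)`), and one containing neither commutes with `e_j`. The
monomials containing exactly one of them are paired by exchanging `j` and `j+1`: moving the
distinguished factor to the front costs the same sign in both, so each pair is `±u` times a
monomial commuting with `e_j`, and is again killed by `e_j`. The two signs agree automatically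
for neighbouring sites; on the bond `(N, 1)` they agree because the other `m - 1` factors are even
in number. The same argument with `v` in place of `u` handles `F†_(m)`.
-/

open Complex Matrix

noncomputable section

namespace SpinChain

/-- The state space of the `N`-site spin chain, `(ℂ²)^{⊗N}` realised as functions on
spin configurations. -/
abbrev V (N : ℕ) := (Fin N → Fin 2) → ℂ

/-- Operators on the spin chain, realised as matrices. -/
abbrev Op (N : ℕ) := Matrix (Fin N → Fin 2) (Fin N → Fin 2) ℂ

def sigmaX : Matrix (Fin 2) (Fin 2) ℂ := !![0, 1; 1, 0]
def sigmaY : Matrix (Fin 2) (Fin 2) ℂ := !![0, -I; I, 0]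
def sigmaZ : Matrix (Fin 2) (Fin 2) ℂ := !![1, 0; 0, -1]
def sigmaPlus : Matrix (Fin 2) (Fin 2) ℂ := ((1 : ℂ)/2) • (sigmaX + I • sigmaY)
def sigmaMinus : Matrix (Fin 2) (Fin 2) ℂ := ((1 : ℂ)/2) • (sigmaX - I • sigmaY)

variable (N : ℕ)

/-- The operator acting as the 2×2 matrix `a` on the `j`-th tensor factor and as the
identity on the others. -/
def site (a : Matrix (Fin 2) (Fin 2) ℂ) (j : Fin N) : Op N :=
  Matrix.of fun x y =>
    a (x j) (y j) * ∏ k ∈ Finset.univ.filter (fun k => k ≠ j), (if x k = y k then (1 : ℂ) else 0)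

/-- Jordan–Wigner string `∏_{k<j} diag(z 0, z 1)_k`. -/
def string (z : Fin 2 → ℂ) (j : Fin N) : Op N :=
  (((List.finRange N).filter (fun k => decide (k < j))).map
    (fun k => site N (Matrix.diagonal z) k)).prod

/-- Jordan–Wigner fermion `c_j := i^{1−j}·(∏_{k<j} diag(−i,i)_k)·σ⁻_j`; here the index
`j : Fin N` labels the physical site `j+1`. -/
def c (j : Fin N) : Op N :=
  (I ^ (-(j : ℤ))) • (string N ![-I, I] j * site N sigmaMinus j)

/-- Jordan–Wigner fermion `c_j† := i^{j−1}·(∏_{k<j} diag(i,−i)_k)·σ⁺_j`. -/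
def cd (j : Fin N) : Op N :=
  (I ^ ((j : ℕ))) • (string N ![I, -I] j * site N sigmaPlus j)

/-- The `gl(1|1)` fermion `f_j := i^j c_j` (physical index `j = j.val + 1`). -/
def f (j : Fin N) : Op N := (I ^ ((j : ℕ) + 1)) • c N j

/-- The `gl(1|1)` fermion `f_j† := i^j c_j†`. -/
def fd (j : Fin N) : Op N := (I ^ ((j : ℕ) + 1)) • cd N j

/-- Cyclic successor on site indices. -/
def fsucc {N : ℕ} (j : Fin N) : Fin N := ⟨(j.val + 1) % N, Nat.mod_lt _ j.pos⟩

/-- Periodic Temperley–Lieb generators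
`e_j = (f_j+f_{j+1})(f_j†+f_{j+1}†)`, with `e_N = (f_N+f_1)(f_N†+f_1†)`. -/
def e (j : Fin N) : Op N := (f N j + f N (fsucc j)) * (fd N j + fd N (fsucc j))

/-- `F_(m) := Σ_{j_1<⋯<j_m} f_{j_1}⋯f_{j_m}`. -/
def Fg (m : ℕ) : Op N :=
  ∑ s ∈ Finset.univ.powersetCard m, ((s.sort (· ≤ ·)).map (f N)).prod

/-- `F†_(m) := Σ_{j_1<⋯<j_m} f†_{j_1}⋯f†_{j_m}`. -/
def Fdg (m : ℕ) : Op N :=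
  ∑ s ∈ Finset.univ.powersetCard m, ((s.sort (· ≤ ·)).map (fd N)).prod

/-- `S^z := (1/2) Σ_j σ^z_j`. -/
def Sz : Op N := ((1 : ℂ)/2) • ∑ j : Fin N, site N sigmaZ j

end SpinChain

section Anticommuting

variable {A : Type*} [Ring A] {x y z : A}

theorem anticomm_add (hy : x * y = -(y * x)) (hz : x * z = -(z * x)) :
    x * (y + z) = -((y + z) * x) := by
  rw [mul_add, add_mul, hy, hz, neg_add]

theorem add_mul_self_eq_zero_of_anticomm (hx : x * x = 0) (hy : y * y = 0)
    (hxy : x * y = -(y * x)) : (x + y) * (x + y) = 0 := by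
  rw [add_mul, mul_add, mul_add, hx, hy, hxy, zero_add, add_zero, neg_add_cancel]

theorem commute_mul_of_anticomm (hy : x * y = -(y * x)) (hz : x * z = -(z * x)) :
    Commute x (y * z) := by
  rw [Commute, SemiconjBy, ← mul_assoc, hy, neg_mul, mul_assoc, hz, mul_neg, neg_neg, mul_assoc]

theorem mul_mul_self_eq_zero_of_anticomm (hxy : x * y = -(y * x)) (hx : x * x = 0) :
    x * y * x = 0 := by
  rw [hxy, neg_mul, mul_assoc, hx, mul_zero, neg_zero]

theorem self_mul_mul_eq_zero_of_anticomm (hxy : x * y = -(y * x)) (hy : y * y = 0) :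
    y * (x * y) = 0 := by
  rw [← mul_assoc, ← neg_neg (y * x), ← hxy, neg_mul, mul_assoc, hy, mul_zero, neg_zero]

end Anticommuting

section SwapFinset

variable {ι : Type*} [DecidableEq ι]

theorem Finset.map_swap_eq_self {a b : ι} {S : Finset ι} (h : a ∈ S ↔ b ∈ S) :
    S.map (Equiv.swap a b).toEmbedding = S := by
  ext x
  rw [Finset.mem_map_equiv, Equiv.symm_swap, Equiv.swap_apply_def]
  split_ifs with hxa hxb
  · subst hxa; exact h.symm
  · subst hxb; exact h
  · rfl

theorem Finset.map_swap_eq_insert_erase {a b : ι} {S : Finset ι} (ha : a ∈ S) (hb : b ∉ S) :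
    S.map (Equiv.swap a b).toEmbedding = insert b (S.erase a) := by
  ext x
  rw [Finset.mem_map_equiv, Equiv.symm_swap, Equiv.swap_apply_def, Finset.mem_insert,
    Finset.mem_erase]
  split_ifs with hxa hxb
  · subst hxa; simp [hb, ne_of_mem_of_not_mem ha hb]
  · subst hxb; simp [ha]
  · simp [hxa, hxb]

end SwapFinset

section OrderedProducts

variable {ι A : Type*} [LinearOrder ι] [Ring A]

def orderedProd (f : ι → A) (s : Finset ι) : A := ((s.sort (· ≤ ·)).map f).prod

def orderedEsymm [Fintype ι] (f : ι → A) (m : ℕ) : A :=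
  ∑ s ∈ Finset.univ.powersetCard m, orderedProd f s

def insertSign (a : ι) (K : Finset ι) : ℤˣ := (-1) ^ (K.filter (· < a)).card

variable {f : ι → A} {x : A} {a b : ι} {K S : Finset ι}

theorem orderedProd_insert_of_forall_lt (h : ∀ x ∈ K, a < x) :
    orderedProd f (insert a K) = f a * orderedProd f K := by
  rw [orderedProd, Finset.sort_insert _ (fun x hx => (h x hx).le) fun ha => lt_irrefl a (h a ha),
    List.map_cons, List.prod_cons, orderedProd]

theorem orderedProd_insert (hf : ∀ j k, j ≠ k → f j * f k = -(f k * f j)) (ha : a ∉ K) :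
    orderedProd f (insert a K) = insertSign a K • (f a * orderedProd f K) := by
  induction K using Finset.induction_on_min with
  | empty => simp [orderedProd, insertSign]
  | insert c K hc ih =>
    have hcK : c ∉ K := fun h => lt_irrefl c (hc c h)
    obtain ⟨hac, haK⟩ : a ≠ c ∧ a ∉ K := by simpa [not_or] using ha
    rcases hac.lt_or_gt with hlt | hgt
    · have hsign : insertSign a (insert c K) = 1 := by
        rw [insertSign, Finset.filter_eq_empty_iff.mpr, Finset.card_empty, pow_zero]
        simp only [Finset.mem_insert, not_lt, forall_eq_or_imp]
        exact ⟨hlt.le, fun x hx => (hlt.trans (hc x hx)).le⟩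
      rw [orderedProd_insert_of_forall_lt, hsign, one_smul]
      simp only [Finset.mem_insert, forall_eq_or_imp]
      exact ⟨hlt, fun x hx => hlt.trans (hc x hx)⟩
    · have hsign : insertSign a (insert c K) = -insertSign a K := by
        rw [insertSign, insertSign, Finset.filter_insert, if_pos hgt,
          Finset.card_insert_of_notMem (fun h => hcK (Finset.mem_filter.mp h).1), pow_succ,
          mul_neg_one]
      have hcaK : ∀ x ∈ insert a K, c < x := by
        simp only [Finset.mem_insert, forall_eq_or_imp]
        exact ⟨hgt, hc⟩
      rw [Finset.insert_comm, orderedProd_insert_of_forall_lt hcaK, ih haK,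
        orderedProd_insert_of_forall_lt hc, hsign, Units.neg_smul, mul_smul_comm,
        ← mul_assoc (f a), hf a c hac, neg_mul, mul_assoc, smul_neg, neg_neg]

theorem orderedProd_insert_add_orderedProd_insert
    (hf : ∀ j k, j ≠ k → f j * f k = -(f k * f j)) (ha : a ∉ K) (hb : b ∉ K)
    (hσ : insertSign a K = insertSign b K) :
    orderedProd f (insert a K) + orderedProd f (insert b K)
      = insertSign a K • ((f a + f b) * orderedProd f K) := by
  rw [orderedProd_insert hf ha, orderedProd_insert hf hb, hσ, add_mul, smul_add]

theorem commute_orderedProd (hx : ∀ k, k ≠ a → k ≠ b → Commute x (f k)) (ha : a ∉ K)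
    (hb : b ∉ K) : Commute x (orderedProd f K) :=
  Commute.list_prod_right _ _ fun y hy => by
    obtain ⟨k, hk, rfl⟩ := List.mem_map.mp hy
    rw [Finset.mem_sort] at hk
    exact hx k (fun h => ha (h ▸ hk)) (fun h => hb (h ▸ hk))

theorem orderedProd_eq_of_mem_of_mem (hf : ∀ j k, j ≠ k → f j * f k = -(f k * f j))
    (hab : a ≠ b) (ha : a ∈ S) (hb : b ∈ S) :
    ∃ (σ : ℤˣ) (K : Finset ι), a ∉ K ∧ b ∉ K ∧
      orderedProd f S = σ • (f a * f b * orderedProd f K) := by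
  refine ⟨insertSign a (S.erase a) * insertSign b ((S.erase a).erase b), (S.erase a).erase b,
    fun h => Finset.notMem_erase a S (Finset.mem_of_mem_erase h), Finset.notMem_erase b _, ?_⟩
  have hb' : b ∈ S.erase a := Finset.mem_erase.mpr ⟨hab.symm, hb⟩
  have hS : S = insert a (insert b ((S.erase a).erase b)) := by
    rw [Finset.insert_erase hb', Finset.insert_erase ha]
  conv_lhs => rw [hS]
  rw [orderedProd_insert hf (by rw [Finset.insert_erase hb']; exact Finset.notMem_erase a S),
    orderedProd_insert hf (Finset.notMem_erase _ _), mul_smul_comm, smul_smul, mul_assoc,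
    Finset.insert_erase hb']

theorem mul_orderedProd_eq_zero (hf : ∀ j k, j ≠ k → f j * f k = -(f k * f j))
    (hf0 : ∀ j, f j * f j = 0) (hab : a ≠ b)
    (hx : ∀ k, k ≠ a → k ≠ b → Commute x (f k)) (hxu : x * (f a + f b) = 0)
    (hux : (f a + f b) * x = 0) (ha : a ∈ S) (hb : b ∈ S) :
    x * orderedProd f S = 0 ∧ orderedProd f S * x = 0 := by
  obtain ⟨σ, K, haK, hbK, hS⟩ := orderedProd_eq_of_mem_of_mem hf hab ha hb
  have hleft : f a * f b = (f a + f b) * f b := by rw [add_mul, hf0, add_zero]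
  have hright : f a * f b = f a * (f a + f b) := by rw [mul_add, hf0, zero_add]
  refine ⟨?_, ?_⟩
  · rw [hS, mul_smul_comm, hleft, ← mul_assoc, ← mul_assoc, hxu, zero_mul, zero_mul, smul_zero]
  · rw [hS, smul_mul_assoc, mul_assoc, (commute_orderedProd hx haK hbK).symm.eq, hright,
      mul_assoc, ← mul_assoc (f a + f b), hux, zero_mul, mul_zero, smul_zero]

theorem commutator_orderedProd_add_map_swap (hf : ∀ j k, j ≠ k → f j * f k = -(f k * f j))
    (hx : ∀ k, k ≠ a → k ≠ b → Commute x (f k)) (hxu : x * (f a + f b) = 0)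
    (hux : (f a + f b) * x = 0) (ha : a ∈ S) (hb : b ∉ S)
    (hσ : insertSign a (S.erase a) = insertSign b (S.erase a)) :
    (x * orderedProd f S - orderedProd f S * x)
      + (x * orderedProd f (S.map (Equiv.swap a b).toEmbedding)
        - orderedProd f (S.map (Equiv.swap a b).toEmbedding) * x) = 0 := by
  have haK := Finset.notMem_erase a S
  have hbK : b ∉ S.erase a := fun h => hb (Finset.mem_of_mem_erase h)
  have hsum := orderedProd_insert_add_orderedProd_insert hf haK hbK hσ
  rw [Finset.insert_erase ha] at hsum
  rw [Finset.map_swap_eq_insert_erase ha hb, sub_add_sub_comm, ← mul_add, ← add_mul, hsum,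
    mul_smul_comm, smul_mul_assoc, ← mul_assoc, hxu, mul_assoc,
    ← (commute_orderedProd hx haK hbK).eq, ← mul_assoc, hux]
  simp

theorem commute_orderedEsymm [Fintype ι] (hf : ∀ j k, j ≠ k → f j * f k = -(f k * f j))
    (hf0 : ∀ j, f j * f j = 0) (hab : a ≠ b)
    (hx : ∀ k, k ≠ a → k ≠ b → Commute x (f k)) (hxu : x * (f a + f b) = 0)
    (hux : (f a + f b) * x = 0) {m : ℕ}
    (hσ : ∀ K : Finset ι, K.card + 1 = m → a ∉ K → b ∉ K →
      insertSign a K = insertSign b K) :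
    Commute x (orderedEsymm f m) := by
  have hfixed : ∀ S : Finset ι, (a ∈ S ↔ b ∈ S) →
      x * orderedProd f S - orderedProd f S * x = 0 := by
    intro S h
    by_cases ha : a ∈ S
    · obtain ⟨h1, h2⟩ := mul_orderedProd_eq_zero hf hf0 hab hx hxu hux ha (h.mp ha)
      rw [h1, h2, sub_self]
    · rw [(commute_orderedProd hx ha (mt h.mpr ha)).eq, sub_self]
  rw [Commute, SemiconjBy, ← sub_eq_zero, orderedEsymm, Finset.mul_sum, Finset.sum_mul,
    ← Finset.sum_sub_distrib]
  refine Finset.sum_involution (fun S _ => S.map (Equiv.swap a b).toEmbedding) ?_ ?_ ?_ ?_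
  · intro S hS
    have hcard : ∀ c ∈ S, (S.erase c).card + 1 = m := fun c hc => by
      rw [Finset.card_erase_add_one hc, (Finset.mem_powersetCard.mp hS).2]
    by_cases h : a ∈ S ↔ b ∈ S
    · rw [Finset.map_swap_eq_self h, hfixed S h, add_zero]
    · by_cases ha : a ∈ S
      · have hb : b ∉ S := fun hb => h (iff_of_true ha hb)
        exact commutator_orderedProd_add_map_swap hf hx hxu hux ha hb
          (hσ _ (hcard a ha) (Finset.notMem_erase a S) fun h => hb (Finset.mem_of_mem_erase h))
      · have hb : b ∈ S := by tauto
        rw [Equiv.swap_comm]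
        refine commutator_orderedProd_add_map_swap hf (fun k hkb hka => hx k hka hkb)
          (by rwa [add_comm]) (by rwa [add_comm]) hb ha (hσ _ (hcard b hb) ?_ ?_).symm
        · exact fun h => ha (Finset.mem_of_mem_erase h)
        · exact Finset.notMem_erase b S
  · intro S _ hne hfix
    have hb : b ∈ S.map (Equiv.swap a b).toEmbedding ↔ a ∈ S := by
      rw [Finset.mem_map_equiv, Equiv.symm_swap, Equiv.swap_apply_right]
    rw [hfix] at hb
    exact hne (hfixed S hb.symm)
  · intro S hS
    simpa [Finset.mem_powersetCard] using hS
  · intro S _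
    ext y
    simp only [Finset.mem_map_equiv, Equiv.symm_swap, Equiv.swap_apply_self]

theorem orderedEsymm_card [Fintype ι] (f : ι → A) :
    orderedEsymm f (Fintype.card ι) = orderedProd f Finset.univ := by
  rw [orderedEsymm, ← Finset.card_univ, Finset.powersetCard_self, Finset.sum_singleton]

end OrderedProducts

section PiKron

variable {κ n R : Type*} [Fintype κ] [DecidableEq κ] [Fintype n] [DecidableEq n] [CommSemiring R]

def Matrix.piKron : (κ → Matrix n n R) →* Matrix (κ → n) (κ → n) R where
  toFun a := Matrix.of fun x y => ∏ k, a k (x k) (y k)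
  map_one' := by
    ext x y
    simp only [Pi.one_apply, Matrix.one_apply, Matrix.of_apply, Fintype.prod_boole, funext_iff]
  map_mul' a b := by
    ext x z
    simp only [Pi.mul_apply, Matrix.mul_apply, Matrix.of_apply, Finset.prod_univ_sum,
      Fintype.piFinset_univ, Finset.prod_mul_distrib]

namespace Matrix

theorem piKron_apply (a : κ → Matrix n n R) (x y : κ → n) :
    piKron a x y = ∏ k, a k (x k) (y k) := rfl

theorem piKron_smul (c : κ → R) (a : κ → Matrix n n R) :
    piKron (fun k => c k • a k) = (∏ k, c k) • piKron a := by
  ext x y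
  simp [piKron_apply, Finset.prod_mul_distrib]

theorem piKron_eq_zero {a : κ → Matrix n n R} (k : κ) (h : a k = 0) : piKron a = 0 := by
  ext x y
  exact Finset.prod_eq_zero (Finset.mem_univ k) (by simp [h])

theorem piKron_update_add (a : κ → Matrix n n R) (k : κ) (p q : Matrix n n R) :
    piKron (Function.update a k (p + q))
      = piKron (Function.update a k p) + piKron (Function.update a k q) := by
  ext x y
  have hrest : ∀ c, ∏ i ∈ {k}ᶜ, Function.update a k c i (x i) (y i)
      = ∏ i ∈ {k}ᶜ, a i (x i) (y i) := fun c =>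
    Finset.prod_congr rfl fun i hi => by
      rw [Function.update_of_ne (Finset.mem_compl.mp hi ∘ Finset.mem_singleton.mpr)]
  simp only [add_apply, piKron_apply, Fintype.prod_eq_mul_prod_compl k, Function.update_self,
    hrest, add_mul]

theorem piKron_mulSingle_apply_eq (a : Matrix n n R) (k : κ) (x y : κ → n) :
    piKron (Pi.mulSingle k a) x y
      = a (x k) (y k) * ∏ i ∈ Finset.univ.filter (· ≠ k), if x i = y i then 1 else 0 := by
  rw [piKron_apply, Fintype.prod_eq_mul_prod_compl k, Pi.mulSingle_eq_same,
    Finset.compl_singleton, ← Finset.filter_ne']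
  refine congrArg _ (Finset.prod_congr rfl fun i hi => ?_)
  rw [Pi.mulSingle_eq_of_ne (Finset.mem_filter.mp hi).2, one_apply]

end Matrix

end PiKron

theorem List.prod_map_mulSingle {ι M : Type*} [DecidableEq ι] [Monoid M] (d : M) {l : List ι}
    (hl : l.Nodup) :
    (l.map fun i => Pi.mulSingle i d).prod = fun k => if k ∈ l then d else 1 := by
  induction l with
  | nil => rfl
  | cons i l ih =>
    obtain ⟨hil, hl⟩ := List.nodup_cons.mp hl
    funext k
    rw [List.map_cons, List.prod_cons, ih hl, Pi.mul_apply]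
    by_cases hk : k = i
    · subst hk
      simp [hil]
    · simp [hk]

namespace SpinChain

variable {N : ℕ}

def stringFactor : Matrix (Fin 2) (Fin 2) ℂ := diagonal ![-I, I]

theorem sigmaMinus_eq : sigmaMinus = !![0, 0; 1, 0] := by
  ext i j
  fin_cases i <;> fin_cases j <;> simp [sigmaMinus, sigmaX, sigmaY, one_add_one_eq_two]

theorem sigmaPlus_eq : sigmaPlus = !![0, 1; 0, 0] := by
  ext i j
  fin_cases i <;> fin_cases j <;> simp [sigmaPlus, sigmaX, sigmaY, one_add_one_eq_two]

theorem stringFactor_eq : stringFactor = !![-I, 0; 0, I] := by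
  ext i j
  fin_cases i <;> fin_cases j <;> simp [stringFactor]

theorem stringFactor_mul_self : stringFactor * stringFactor = -1 := by
  rw [stringFactor_eq]
  ext i j
  fin_cases i <;> fin_cases j <;> simp

theorem diagonal_I_neg_I : (diagonal ![I, -I] : Matrix (Fin 2) (Fin 2) ℂ) = -stringFactor := by
  ext i j
  fin_cases i <;> fin_cases j <;> simp [stringFactor]

theorem sigmaMinus_mul_stringFactor : sigmaMinus * stringFactor = -(stringFactor * sigmaMinus) := by
  rw [sigmaMinus_eq, stringFactor_eq]
  ext i j
  fin_cases i <;> fin_cases j <;> simp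

theorem sigmaPlus_mul_stringFactor : sigmaPlus * stringFactor = -(stringFactor * sigmaPlus) := by
  rw [sigmaPlus_eq, stringFactor_eq]
  ext i j
  fin_cases i <;> fin_cases j <;> simp

theorem sigmaMinus_mul_self : sigmaMinus * sigmaMinus = 0 := by
  rw [sigmaMinus_eq]
  ext i j
  fin_cases i <;> fin_cases j <;> simp

theorem sigmaPlus_mul_self : sigmaPlus * sigmaPlus = 0 := by
  rw [sigmaPlus_eq]
  ext i j
  fin_cases i <;> fin_cases j <;> simp

theorem sigmaMinus_mul_sigmaPlus_add : sigmaMinus * sigmaPlus + sigmaPlus * sigmaMinus = 1 := by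
  rw [sigmaMinus_eq, sigmaPlus_eq]
  ext i j
  fin_cases i <;> fin_cases j <;> simp

theorem site_eq_piKron (a : Matrix (Fin 2) (Fin 2) ℂ) (j : Fin N) :
    site N a j = piKron (Pi.mulSingle j a) := by
  ext x y
  rw [piKron_mulSingle_apply_eq]
  rfl

theorem string_eq_piKron (z : Fin 2 → ℂ) (j : Fin N) :
    string N z j = piKron fun k => if k < j then diagonal z else 1 := by
  have hprod := List.prod_map_hom ((List.finRange N).filter fun k => k < j)
    (fun k => Pi.mulSingle k (diagonal z)) piKron
  rw [List.prod_map_mulSingle _ ((List.nodup_finRange N).filter _)] at hprod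
  rw [string, List.map_congr_left fun k _ => site_eq_piKron _ k]
  simp only [List.mem_filter, List.mem_finRange, true_and, decide_eq_true_eq] at hprod
  exact hprod

theorem prod_ite_lt_neg_one (j : Fin N) :
    ∏ m : Fin N, (if m < j then (-1 : ℂ) else 1) = (-1) ^ (j : ℕ) := by
  rw [Finset.prod_ite, Finset.prod_const, Finset.prod_const_one, mul_one, Finset.filter_gt_eq_Iio,
    Fin.card_Iio]

def stringProfile (j : Fin N) : Fin N → Matrix (Fin 2) (Fin 2) ℂ :=
  fun k => if k < j then stringFactor else 1

def jwOp (s : Matrix (Fin 2) (Fin 2) ℂ) (j : Fin N) : Op N :=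
  piKron (Function.update (stringProfile j) j s)

theorem string_neg_I_I (j : Fin N) : string N ![-I, I] j = piKron (stringProfile j) :=
  string_eq_piKron _ j

theorem string_I_neg_I (j : Fin N) :
    string N ![I, -I] j = (-1 : ℂ) ^ (j : ℕ) • piKron (stringProfile j) := by
  have hprofile : (fun k => if k < j then (diagonal ![I, -I] : Matrix (Fin 2) (Fin 2) ℂ) else 1)
      = fun k => (if k < j then (-1 : ℂ) else 1) • stringProfile j k := by
    funext k
    unfold stringProfile
    split_ifs <;> simp [diagonal_I_neg_I]
  rw [string_eq_piKron, hprofile, piKron_smul, prod_ite_lt_neg_one]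

theorem piKron_stringProfile_mul_site (s : Matrix (Fin 2) (Fin 2) ℂ) (j : Fin N) :
    piKron (stringProfile j) * site N s j = jwOp s j := by
  rw [site_eq_piKron, ← map_mul, jwOp]
  congr 1
  funext m
  by_cases hm : m = j
  · subst hm
    simp [stringProfile]
  · simp [hm]

theorem jwOp_mul_jwOp_of_lt {s : Matrix (Fin 2) (Fin 2) ℂ} (t : Matrix (Fin 2) (Fin 2) ℂ)
    (hs : s * stringFactor = -(stringFactor * s)) {j k : Fin N} (hjk : j < k) :
    jwOp s j * jwOp t k = -(jwOp t k * jwOp s j) := by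
  have hsite : Function.update (stringProfile j) j s * Function.update (stringProfile k) k t
      = fun m => (if m = j then (-1 : ℂ) else 1) •
        (Function.update (stringProfile k) k t * Function.update (stringProfile j) j s) m := by
    funext m
    simp only [Pi.mul_apply, Function.update_apply, stringProfile]
    rcases lt_trichotomy m j with hm | rfl | hm
    · simp [hm, hm.ne, hm.trans hjk, (hm.trans hjk).ne]
    · simp [hjk, hjk.ne, hs]
    · rcases lt_trichotomy m k with hm' | rfl | hm'
      · simp [hm.ne', hm.not_gt, hm', hm'.ne]
      · simp [hm.ne', hm.not_gt]
      · simp [hm.ne', hm.not_gt, hm'.ne', hm'.not_gt]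
  rw [jwOp, jwOp, ← map_mul, ← map_mul, hsite, piKron_smul, Finset.prod_ite_eq',
    if_pos (Finset.mem_univ _), neg_one_smul]

theorem jwOp_anticomm_of_ne {s t : Matrix (Fin 2) (Fin 2) ℂ}
    (hs : s * stringFactor = -(stringFactor * s)) (ht : t * stringFactor = -(stringFactor * t))
    {j k : Fin N} (hjk : j ≠ k) : jwOp s j * jwOp t k = -(jwOp t k * jwOp s j) := by
  rcases hjk.lt_or_gt with h | h
  · exact jwOp_mul_jwOp_of_lt t hs h
  · rw [jwOp_mul_jwOp_of_lt s ht h, neg_neg]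

theorem jwOp_mul_self {s : Matrix (Fin 2) (Fin 2) ℂ} (hs : s * s = 0) (j : Fin N) :
    jwOp s j * jwOp s j = 0 := by
  rw [jwOp, ← map_mul]
  exact piKron_eq_zero j (by simp [hs])

theorem jwOp_anticomm_self {s t : Matrix (Fin 2) (Fin 2) ℂ} (hst : s * t + t * s = 1)
    (j : Fin N) : jwOp s j * jwOp t j + jwOp t j * jwOp s j = ((-1 : ℂ) ^ (j : ℕ)) • 1 := by
  unfold jwOp
  rw [← map_mul, ← map_mul, ← Function.update_mul, ← Function.update_mul,
    ← piKron_update_add, hst]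
  have hsite : Function.update (stringProfile j * stringProfile j) j 1
      = fun m => (if m < j then (-1 : ℂ) else 1) •
        (1 : Fin N → Matrix (Fin 2) (Fin 2) ℂ) m := by
    funext m
    rw [Function.update_apply]
    split_ifs with h1 h2 <;> simp_all [stringProfile, stringFactor_mul_self]
  rw [hsite, piKron_smul, map_one, prod_ite_lt_neg_one]

theorem f_eq_smul_jwOp (j : Fin N) : f N j = I • jwOp sigmaMinus j := by
  rw [f, c, string_neg_I_I, piKron_stringProfile_mul_site, smul_smul, _root_.zpow_neg,
    zpow_natCast, pow_succ', mul_assoc, mul_inv_cancel₀ (pow_ne_zero _ I_ne_zero), mul_one]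

theorem fd_eq_smul_jwOp (j : Fin N) : fd N j = I • jwOp sigmaPlus j := by
  rw [fd, cd, string_I_neg_I, smul_mul_assoc, piKron_stringProfile_mul_site, smul_smul,
    smul_smul]
  congr 1
  calc I ^ ((j : ℕ) + 1) * I ^ (j : ℕ) * (-1) ^ (j : ℕ)
    _ = I * (I * I * -1) ^ (j : ℕ) := by ring
    _ = I := by rw [I_mul_I, neg_one_mul, neg_neg, one_pow, mul_one]

theorem f_mul_self (j : Fin N) : f N j * f N j = 0 := by
  rw [f_eq_smul_jwOp, smul_mul_smul_comm, jwOp_mul_self sigmaMinus_mul_self, smul_zero]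

theorem fd_mul_self (j : Fin N) : fd N j * fd N j = 0 := by
  rw [fd_eq_smul_jwOp, smul_mul_smul_comm, jwOp_mul_self sigmaPlus_mul_self, smul_zero]

theorem f_anticomm (j k : Fin N) : f N j * f N k = -(f N k * f N j) := by
  rcases eq_or_ne j k with rfl | hjk
  · rw [f_mul_self, neg_zero]
  · rw [f_eq_smul_jwOp, f_eq_smul_jwOp, smul_mul_smul_comm, smul_mul_smul_comm,
      jwOp_anticomm_of_ne sigmaMinus_mul_stringFactor sigmaMinus_mul_stringFactor hjk, smul_neg]

theorem fd_anticomm (j k : Fin N) : fd N j * fd N k = -(fd N k * fd N j) := by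
  rcases eq_or_ne j k with rfl | hjk
  · rw [fd_mul_self, neg_zero]
  · rw [fd_eq_smul_jwOp, fd_eq_smul_jwOp, smul_mul_smul_comm, smul_mul_smul_comm,
      jwOp_anticomm_of_ne sigmaPlus_mul_stringFactor sigmaPlus_mul_stringFactor hjk, smul_neg]

theorem f_fd_anticomm_of_ne {j k : Fin N} (hjk : j ≠ k) :
    f N j * fd N k = -(fd N k * f N j) := by
  rw [f_eq_smul_jwOp, fd_eq_smul_jwOp, smul_mul_smul_comm, smul_mul_smul_comm,
    jwOp_anticomm_of_ne sigmaMinus_mul_stringFactor sigmaPlus_mul_stringFactor hjk, smul_neg]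

theorem fd_f_anticomm_of_ne {j k : Fin N} (hjk : j ≠ k) :
    fd N j * f N k = -(f N k * fd N j) := by
  rw [f_fd_anticomm_of_ne hjk.symm, neg_neg]

theorem f_fd_anticomm_self (j : Fin N) :
    f N j * fd N j + fd N j * f N j = ((-1 : ℂ) ^ ((j : ℕ) + 1)) • 1 := by
  rw [f_eq_smul_jwOp, fd_eq_smul_jwOp, smul_mul_smul_comm, smul_mul_smul_comm, ← smul_add,
    jwOp_anticomm_self sigmaMinus_mul_sigmaPlus_add, smul_smul, I_mul_I, pow_succ', neg_one_mul]

theorem f_add_f_anticomm_fd_add_fd {a b : Fin N} (hab : a ≠ b)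
    (hsign : (-1 : ℂ) ^ (b : ℕ) = -(-1) ^ (a : ℕ)) :
    (f N a + f N b) * (fd N a + fd N b) = -((fd N a + fd N b) * (f N a + f N b)) := by
  refine eq_neg_of_add_eq_zero_left ?_
  calc (f N a + f N b) * (fd N a + fd N b) + (fd N a + fd N b) * (f N a + f N b)
      = (f N a * fd N a + fd N a * f N a) + (f N b * fd N b + fd N b * f N b)
        + (f N a * fd N b + fd N b * f N a) + (f N b * fd N a + fd N a * f N b) := by noncomm_ring
    _ = 0 := by
      rw [f_fd_anticomm_self, f_fd_anticomm_self, f_fd_anticomm_of_ne hab,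
        f_fd_anticomm_of_ne hab.symm, pow_succ, pow_succ, hsign, neg_mul, neg_smul]
      abel

theorem fsucc_val_of_lt {j : Fin N} (h : (j : ℕ) + 1 < N) : (fsucc j : ℕ) = j + 1 :=
  Nat.mod_eq_of_lt h

theorem fsucc_val_of_eq {j : Fin N} (h : (j : ℕ) + 1 = N) : (fsucc j : ℕ) = 0 := by
  simp [fsucc, h]

theorem self_ne_fsucc (hN : Even N) (j : Fin N) : j ≠ fsucc j := by
  rw [ne_eq, Fin.ext_iff]
  rcases (Nat.succ_le_of_lt j.isLt).lt_or_eq with h | h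
  · rw [fsucc_val_of_lt h]; omega
  · rw [fsucc_val_of_eq h]
    obtain ⟨r, hr⟩ := hN
    omega

theorem neg_one_pow_fsucc (hN : Even N) (j : Fin N) :
    (-1 : ℂ) ^ (fsucc j : ℕ) = -(-1) ^ (j : ℕ) := by
  rcases (Nat.succ_le_of_lt j.isLt).lt_or_eq with h | h
  · rw [fsucc_val_of_lt h, pow_succ, mul_neg_one]
  · have hj : Odd (j : ℕ) := by
      obtain ⟨r, hr⟩ := hN
      exact ⟨r - 1, by omega⟩
    rw [fsucc_val_of_eq h, pow_zero, hj.neg_one_pow, neg_neg]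

theorem insertSign_fsucc {j : Fin N} {K : Finset (Fin N)} (hj : j ∉ K)
    (hK : Even K.card) : insertSign j K = insertSign (fsucc j) K := by
  have hval : ∀ x ∈ K, (x : ℕ) ≠ j := fun x hx h => hj (Fin.ext h ▸ hx)
  rcases (Nat.succ_le_of_lt j.isLt).lt_or_eq with h | h
  · have hfilter : K.filter (· < fsucc j) = K.filter (· < j) :=
      Finset.filter_congr fun x hx => by
        rw [Fin.lt_def, Fin.lt_def, fsucc_val_of_lt h]
        have := hval x hx
        omega
    rw [insertSign, insertSign, hfilter]
  · have hall : K.filter (· < j) = K :=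
      Finset.filter_true_of_mem fun x hx => by
        rw [Fin.lt_def]
        have := hval x hx
        omega
    have hnone : K.filter (· < fsucc j) = ∅ :=
      Finset.filter_false_of_mem fun x _ => by
        rw [Fin.lt_def, fsucc_val_of_eq h]
        omega
    rw [insertSign, insertSign, hall, hnone, hK.neg_one_pow, Finset.card_empty, pow_zero]

theorem commute_e_f {j k : Fin N} (hkj : k ≠ j) (hks : k ≠ fsucc j) : Commute (e N j) (f N k) :=
  (commute_mul_of_anticomm (anticomm_add (f_anticomm k j) (f_anticomm k _))
    (anticomm_add (f_fd_anticomm_of_ne hkj) (f_fd_anticomm_of_ne hks))).symm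

theorem commute_e_fd {j k : Fin N} (hkj : k ≠ j) (hks : k ≠ fsucc j) :
    Commute (e N j) (fd N k) :=
  (commute_mul_of_anticomm (anticomm_add (fd_f_anticomm_of_ne hkj) (fd_f_anticomm_of_ne hks))
    (anticomm_add (fd_anticomm k j) (fd_anticomm k _))).symm

theorem e_factors_anticomm (hN : Even N) (j : Fin N) :
    (f N j + f N (fsucc j)) * (fd N j + fd N (fsucc j))
      = -((fd N j + fd N (fsucc j)) * (f N j + f N (fsucc j))) :=
  f_add_f_anticomm_fd_add_fd (self_ne_fsucc hN j) (neg_one_pow_fsucc hN j)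

theorem f_add_f_mul_self (j : Fin N) : (f N j + f N (fsucc j)) * (f N j + f N (fsucc j)) = 0 :=
  add_mul_self_eq_zero_of_anticomm (f_mul_self _) (f_mul_self _) (f_anticomm _ _)

theorem fd_add_fd_mul_self (j : Fin N) :
    (fd N j + fd N (fsucc j)) * (fd N j + fd N (fsucc j)) = 0 :=
  add_mul_self_eq_zero_of_anticomm (fd_mul_self _) (fd_mul_self _) (fd_anticomm _ _)

theorem e_mul_f_add_f (hN : Even N) (j : Fin N) : e N j * (f N j + f N (fsucc j)) = 0 :=
  mul_mul_self_eq_zero_of_anticomm (e_factors_anticomm hN j) (f_add_f_mul_self j)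

theorem f_add_f_mul_e (j : Fin N) : (f N j + f N (fsucc j)) * e N j = 0 := by
  rw [e, ← mul_assoc, f_add_f_mul_self, zero_mul]

theorem e_mul_fd_add_fd (j : Fin N) : e N j * (fd N j + fd N (fsucc j)) = 0 := by
  rw [e, mul_assoc, fd_add_fd_mul_self, mul_zero]

theorem fd_add_fd_mul_e (hN : Even N) (j : Fin N) : (fd N j + fd N (fsucc j)) * e N j = 0 :=
  self_mul_mul_eq_zero_of_anticomm (e_factors_anticomm hN j) (fd_add_fd_mul_self j)

theorem Fg_eq_orderedEsymm (m : ℕ) : Fg N m = orderedEsymm (f N) m := rfl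

theorem Fdg_eq_orderedEsymm (m : ℕ) : Fdg N m = orderedEsymm (fd N) m := rfl

theorem Fg_top_eq_orderedProd : Fg N N = orderedProd (f N) Finset.univ := by
  rw [Fg_eq_orderedEsymm]
  have h := orderedEsymm_card (f N)
  rwa [Fintype.card_fin] at h

theorem Fdg_top_eq_orderedProd : Fdg N N = orderedProd (fd N) Finset.univ := by
  rw [Fdg_eq_orderedEsymm]
  have h := orderedEsymm_card (fd N)
  rwa [Fintype.card_fin] at h

theorem insertSign_fsucc_of_odd (j : Fin N) {m : ℕ} (hm : Odd m) (K : Finset (Fin N))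
    (hK : K.card + 1 = m) (hj : j ∉ K) : insertSign j K = insertSign (fsucc j) K := by
  obtain ⟨r, hr⟩ := hm
  exact insertSign_fsucc hj ⟨r, by omega⟩

theorem commute_e_Fg (hN : Even N) (j : Fin N) {m : ℕ} (hm : Odd m) :
    Commute (e N j) (Fg N m) := by
  rw [Fg_eq_orderedEsymm]
  exact commute_orderedEsymm (fun a b _ => f_anticomm a b) f_mul_self (self_ne_fsucc hN j)
    (fun _ => commute_e_f) (e_mul_f_add_f hN j) (f_add_f_mul_e j)
    fun K hK hj _ => insertSign_fsucc_of_odd j hm K hK hj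

theorem commute_e_Fdg (hN : Even N) (j : Fin N) {m : ℕ} (hm : Odd m) :
    Commute (e N j) (Fdg N m) := by
  rw [Fdg_eq_orderedEsymm]
  exact commute_orderedEsymm (fun a b _ => fd_anticomm a b) fd_mul_self (self_ne_fsucc hN j)
    (fun _ => commute_e_fd) (e_mul_fd_add_fd j) (fd_add_fd_mul_e hN j)
    fun K hK hj _ => insertSign_fsucc_of_odd j hm K hK hj

theorem e_mul_Fg_top (hN : Even N) (j : Fin N) : e N j * Fg N N = 0 ∧ Fg N N * e N j = 0 := by
  rw [Fg_top_eq_orderedProd]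
  exact mul_orderedProd_eq_zero (fun a b _ => f_anticomm a b) f_mul_self (self_ne_fsucc hN j)
    (fun _ => commute_e_f) (e_mul_f_add_f hN j) (f_add_f_mul_e j) (Finset.mem_univ _)
    (Finset.mem_univ _)

theorem e_mul_Fdg_top (hN : Even N) (j : Fin N) :
    e N j * Fdg N N = 0 ∧ Fdg N N * e N j = 0 := by
  rw [Fdg_top_eq_orderedProd]
  exact mul_orderedProd_eq_zero (fun a b _ => fd_anticomm a b) fd_mul_self (self_ne_fsucc hN j)
    (fun _ => commute_e_fd) (e_mul_fd_add_fd j) (fd_add_fd_mul_e hN j) (Finset.mem_univ _)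
    (Finset.mem_univ _)

theorem gl11_odd_generators_commute_with_periodic_TL_general (L : ℕ) :
    (∀ n : ℕ, 2 * n + 1 ≤ 2 * L → ∀ j : Fin (2 * L),
      ⁅e (2 * L) j, Fg (2 * L) (2 * n + 1)⁆ = 0 ∧
      ⁅e (2 * L) j, Fdg (2 * L) (2 * n + 1)⁆ = 0) ∧
    (∀ j : Fin (2 * L),
      e (2 * L) j * Fg (2 * L) (2 * L) = 0 ∧ Fg (2 * L) (2 * L) * e (2 * L) j = 0 ∧
      e (2 * L) j * Fdg (2 * L) (2 * L) = 0 ∧ Fdg (2 * L) (2 * L) * e (2 * L) j = 0) := by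
  have hN : Even (2 * L) := even_two_mul L
  refine ⟨fun n _ j => ?_, fun j => ?_⟩
  · exact ⟨(commute_e_Fg hN j (odd_two_mul_add_one n)).lie_eq,
      (commute_e_Fdg hN j (odd_two_mul_add_one n)).lie_eq⟩
  · obtain ⟨hFl, hFr⟩ := e_mul_Fg_top hN j
    obtain ⟨hFdl, hFdr⟩ := e_mul_Fdg_top hN j
    exact ⟨hFl, hFr, hFdl, hFdr⟩

/-- **The odd fermionic symmetry generators commute with the periodic
Temperley–Lieb algebra:** for every `n ≥ 0` with `2n+1 ≤ N` and every `j`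
(periodic convention), `[e_j, F_(2n+1)] = 0 = [e_j, F†_(2n+1)]`; moreover the
top products `F_(N) = f_1⋯f_N` and `F†_(N) = f_1†⋯f_N†` annihilate every `e_j`
from both sides. -/
theorem gl11_odd_generators_commute_with_periodic_TL (L : ℕ) (hL : 0 < L) :
    (∀ n : ℕ, 2 * n + 1 ≤ 2 * L → ∀ j : Fin (2 * L),
      ⁅e (2 * L) j, Fg (2 * L) (2 * n + 1)⁆ = 0 ∧
      ⁅e (2 * L) j, Fdg (2 * L) (2 * n + 1)⁆ = 0) ∧
    (∀ j : Fin (2 * L),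
      e (2 * L) j * Fg (2 * L) (2 * L) = 0 ∧ Fg (2 * L) (2 * L) * e (2 * L) j = 0 ∧
      e (2 * L) j * Fdg (2 * L) (2 * L) = 0 ∧ Fdg (2 * L) (2 * L) * e (2 * L) j = 0) :=
  gl11_odd_generators_commute_with_periodic_TL_general L

end SpinChain

end
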